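/- arXiv:1109.2246 — 2 statements merged into one kernel-verified Lean document; each statement's English description precedes it below -/
import Mathlib

section
/- Let I be a set, 𝒰 a countably complete ultrafilter on I, and (A_i)_{i∈I} a family of finite nonempty sets. Then the reduced product of the A_i modulo 𝒰 — the quotient of ∏_{i∈I} A_i by the relation f ~ g iff {i : f(i) = g(i)} ∈ 𝒰 — is a finite set. -/
/-- An ultrafilter is countably complete if it is closed under countable intersections. -/
def Ultrafilter.CountablyComplete {I : Type*} (u : Ultrafilter I) : Prop :=
  ∀ s : ℕ → Set I, (∀ n, s n ∈ u) → (⋂ n, s n) ∈ u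

/-- If `𝒰` is a countably complete ultrafilter on `I` and `(A_i)_{i ∈ I}` is a family of
finite nonempty sets, then the reduced product of the `A_i` modulo `𝒰` (the quotient of
`∀ i, A i` by the relation `f ~ g` iff `{i | f i = g i} ∈ 𝒰`) is finite. -/
theorem finite_ultraproduct_of_countablyComplete {I : Type*} (u : Ultrafilter I)
    (hu : u.CountablyComplete) (A : I → Type*) (hAfin : ∀ i, Finite (A i))
    (hAne : ∀ i, Nonempty (A i)) :
    Finite ((↑u : Filter I).Product A) := by
  classical
  haveI := hAfin
  haveI := hAne
  obtain ⟨n, hn⟩ : ∃ n, {i | Nat.card (A i) = n} ∈ u := by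
    by_contra h
    push_neg at h
    have h' : ∀ m, {i | Nat.card (A i) = m}ᶜ ∈ u := fun m =>
      Ultrafilter.compl_mem_iff_notMem.mpr (h m)
    have hmem := hu _ h'
    have hempty : (⋂ m, {i | Nat.card (A i) = m}ᶜ) = ∅ := by
      ext i; simp
    rw [hempty] at hmem
    exact u.neBot.ne (Filter.empty_mem_iff_bot.mp hmem)
  set e : ∀ i, A i ≃ Fin (Nat.card (A i)) := fun i => Finite.equivFin (A i) with he
  let g : Fin n → ∀ i, A i := fun k i =>
    if h : (k : ℕ) < Nat.card (A i) then (e i).symm ⟨k, h⟩ else Classical.arbitrary _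
  have hsurj : Function.Surjective
      (fun k : Fin n => (↑(g k) : (↑u : Filter I).Product A)) := by
    intro x
    induction x using Quotient.inductionOn with
    | h f =>
      have hcover : (⋃ k ∈ Finset.range n, {i | ((e i) (f i) : ℕ) = k}) ∈ u := by
        filter_upwards [hn] with i hi
        simp only [Set.mem_iUnion, Finset.mem_range]
        exact ⟨(e i (f i) : ℕ), by rw [← hi]; exact (e i (f i)).isLt, rfl⟩
      obtain ⟨k, hk, hku⟩ :=
        (Ultrafilter.finite_biUnion_mem_iff (Finset.range n).finite_toSet).mp hcover
      have hkn : k < n := Finset.mem_range.mp hk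
      refine ⟨⟨k, hkn⟩, ?_⟩
      apply Quotient.sound
      filter_upwards [hku, hn] with i hi hni
      show g ⟨k, hkn⟩ i = f i
      have hlt : k < Nat.card (A i) := by rw [hni]; exact hkn
      simp only [g, dif_pos hlt]
      have : e i (f i) = ⟨k, hlt⟩ := Fin.ext hi
      rw [← this]
      exact (e i).symm_apply_apply (f i)
  exact Finite.of_surjective _ hsurj
end

section
/- Let M be a nonempty metric space, X ⊆ M a nonempty subset, and η, δ ≥ 0 real numbers. Let ψ, ψ' : M → ℝ be functions with 0 ≤ ψ and 0 ≤ ψ' everywhere. Assume: (i) for every a ∈ M there is x ∈ X with d(a, x) ≤ η (X is an η-net); (ii) |ψ(x) − ψ'(x)| ≤ δ for all x ∈ X; and (iii) |ψ(u) − ψ(v)| ≤ δ whenever u, v ∈ M satisfy d(u, v) ≤ η. Then |inf_{a ∈ M} ψ(a) − inf_{x ∈ X} ψ'(x)| ≤ 2δ. -/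
/-- If `X` is an `η`-net in the nonempty metric space `M`, `ψ'` approximates `ψ` within `δ`
on `X`, and `ψ` varies by at most `δ` on pairs of points at distance at most `η`, then the
infimum of `ψ` over `M` and the infimum of `ψ'` over `X` differ by at most `2δ`. -/
theorem abs_iInf_sub_iInf_le {M : Type*} [MetricSpace M] [Nonempty M] (X : Set M)
    (hX : X.Nonempty) (η δ : ℝ) (hη : 0 ≤ η) (hδ : 0 ≤ δ) (ψ ψ' : M → ℝ)
    (hψ0 : ∀ a : M, 0 ≤ ψ a) (hψ'0 : ∀ a : M, 0 ≤ ψ' a)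
    (hnet : ∀ a : M, ∃ x ∈ X, dist a x ≤ η)
    (happrox : ∀ x ∈ X, |ψ x - ψ' x| ≤ δ)
    (hcont : ∀ u v : M, dist u v ≤ η → |ψ u - ψ v| ≤ δ) :
    |(⨅ a : M, ψ a) - ⨅ x : X, ψ' x| ≤ 2 * δ := by
  have hXne : Nonempty X := hX.to_subtype
  have hbψ : BddBelow (Set.range ψ) := ⟨0, by rintro _ ⟨a, rfl⟩; exact hψ0 a⟩
  have hbψ' : BddBelow (Set.range fun x : X => ψ' x) :=
    ⟨0, by rintro _ ⟨a, rfl⟩; exact hψ'0 a⟩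
  rw [abs_sub_le_iff]
  constructor
  · rw [sub_le_iff_le_add]
    have h1 : (⨅ a : M, ψ a) - δ ≤ ⨅ x : X, ψ' x := by
      apply le_ciInf
      intro x
      have h2 : ψ x.1 - ψ' x.1 ≤ δ := (abs_le.1 (happrox x.1 x.2)).2
      have h3 : (⨅ a : M, ψ a) ≤ ψ x.1 := ciInf_le hbψ _
      linarith
    linarith
  · rw [sub_le_iff_le_add]
    have h1 : (⨅ x : X, ψ' x) - 2 * δ ≤ ⨅ a : M, ψ a := by
      apply le_ciInf
      intro a
      obtain ⟨x, hx, hd⟩ := hnet a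
      have h2 : |ψ x - ψ' x| ≤ δ := happrox x hx
      have h3 : |ψ a - ψ x| ≤ δ := hcont a x hd
      have h4 : (⨅ x : X, ψ' x) ≤ ψ' x := ciInf_le hbψ' ⟨x, hx⟩
      rw [abs_le] at h2 h3
      linarith [h2.2, h3.2]
    linarith
end
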